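/- arXiv:1207.5103 — 5 statements merged into one kernel-verified Lean document; each statement's English description precedes it below -/
import Mathlib

section
/- For any N×4 table of numbers ±1 with columns A, A', B, B', the averages of products over rows satisfy the CHSH inequality ⟨AB⟩ + ⟨AB'⟩ + ⟨A'B⟩ − ⟨A'B'⟩ ≤ 2. -/
/-! Row by row, `a b + a b' + a' b - a' b' = a (b + b') + a' (b - b') ≤ |b + b'| + |b - b'|`,
and `|b + b'| + |b - b'| = 2 max (|b|, |b'|) ≤ 2`. The same bound then holds for the row average. -/

open Finset
open scoped BigOperators

section CHSH

variable {α : Type*} [CommRing α] [LinearOrder α] [IsStrictOrderedRing α]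

lemma abs_add_add_abs_sub_le {b b' c : α} (hb : |b| ≤ c) (hb' : |b'| ≤ c) :
    |b + b'| + |b - b'| ≤ 2 * c := by
  rw [abs_le] at hb hb'
  rcases abs_cases (b + b') with ⟨h₁, -⟩ | ⟨h₁, -⟩ <;>
    rcases abs_cases (b - b') with ⟨h₂, -⟩ | ⟨h₂, -⟩ <;> linarith

lemma mul_le_abs_of_abs_le_one {a x : α} (ha : |a| ≤ 1) : a * x ≤ |x| :=
  calc a * x ≤ |a * x| := le_abs_self _
    _ = |a| * |x| := abs_mul a x
    _ ≤ |x| := mul_le_of_le_one_left (abs_nonneg x) ha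

lemma chsh_le_two {a a' b b' : α} (ha : |a| ≤ 1) (ha' : |a'| ≤ 1) (hb : |b| ≤ 1)
    (hb' : |b'| ≤ 1) : a * b + a * b' + a' * b - a' * b' ≤ 2 :=
  calc a * b + a * b' + a' * b - a' * b' = a * (b + b') + a' * (b - b') := by ring
    _ ≤ |b + b'| + |b - b'| :=
        add_le_add (mul_le_abs_of_abs_le_one ha) (mul_le_abs_of_abs_le_one ha')
    _ ≤ 2 := by simpa using abs_add_add_abs_sub_le hb hb'

lemma abs_le_one_of_eq_one_or_eq_neg_one {x : α} (hx : x = 1 ∨ x = -1) : |x| ≤ 1 := by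
  rcases hx with rfl | rfl <;> simp

end CHSH

/-- Fact 2: the CHSH inequality for averages over the rows of an `N × 4`
table of numbers `±1` with columns `A, A', B, B'`. -/
theorem chsh_average (N : ℕ) (hN : 0 < N) (A A' B B' : Fin N → ℝ)
    (hA : ∀ j, A j = 1 ∨ A j = -1) (hA' : ∀ j, A' j = 1 ∨ A' j = -1)
    (hB : ∀ j, B j = 1 ∨ B j = -1) (hB' : ∀ j, B' j = 1 ∨ B' j = -1) :
    (1 / N) * ∑ j, A j * B j + (1 / N) * ∑ j, A j * B' j
      + (1 / N) * ∑ j, A' j * B j - (1 / N) * ∑ j, A' j * B' j ≤ 2 := by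
  have hmean (f : Fin N → ℝ) : (1 / N) * ∑ j, f j = 𝔼 j, f j := by
    rw [Fintype.expect_eq_sum_div_card, Fintype.card_fin, one_div_mul_eq_div]
  simp only [hmean, ← expect_add_distrib, ← expect_sub_distrib]
  have : Nonempty (Fin N) := ⟨⟨0, hN⟩⟩
  exact expect_le univ_nonempty fun j _ ↦
    chsh_le_two (abs_le_one_of_eq_one_or_eq_neg_one (hA j))
      (abs_le_one_of_eq_one_or_eq_neg_one (hA' j)) (abs_le_one_of_eq_one_or_eq_neg_one (hB j))
      (abs_le_one_of_eq_one_or_eq_neg_one (hB' j))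
end

section
/- (Theorem 1, finite-sample CHSH inequality.) Suppose for each row of the table, independently across rows, one of A, A' is selected uniformly at random and one of B, B' is selected uniformly at random (four equally likely setting pairs per row, chosen independently of everything else). Then for any η ≥ 0, the probability that ⟨AB⟩_obs + ⟨AB'⟩_obs + ⟨A'B⟩_obs − ⟨A'B'⟩_obs ≤ 2 + η is at least 1 − 8·exp(−N·(η/16)²). -/
/-!
In every row the four CHSH terms `A B`, `A B'`, `A' B`, `-A' B'` multiply to `-(A A' B B')² = -1`,
so at least one of them is `-1`, and the coins pick such a term with probability at least `1/4`.
Chernoff bounds for Bernoulli(1/4)-type counts, using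
`log ((3 + eᵗ) / 4) ≤ t / 4 + t² / 9` for `0 ≤ t ≤ 3/8` and `≤ t / 4 + 3 t² / 32` for `t ≤ 0`
(close to the variance `3/16`; Hoeffding's `t² / 8` is too weak), show that off nine events every
count `n_c` of rows with setting pair `c` is within `s N` of `N / 4`, `s = η / 24`, and at least
`(1/4 - s) N` rows pick a `-1` term. There, replacing each `1 / n_c` by `4 / N` costs at most
`16 s` in total, while `4 / N` times the sum of the picked terms is at most `2 + 8 s`.
The four upper-tail events have probability at most `E = exp (-N (η/16)²)` each and the five
lower-tail ones at most `exp (-8 s² N / 3)`, which is at most `3 E / 4` once `8 E < 1`;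
and `4 + 5 · 3/4 ≤ 8`.
-/

open MeasureTheory

/-- The set of rows (out of `N`) in which the pair of coins takes the value `c`.
For each row `j`, `ω j` records the two coin tosses for that row:
`(ω j).1 = true` means `A` (rather than `A'`) is observed, and
`(ω j).2 = true` means `B` (rather than `B'`) is observed. -/
noncomputable def obsRows (N : ℕ) (ω : Fin N → Bool × Bool) (c : Bool × Bool) :
    Finset (Fin N) :=
  Finset.univ.filter (fun j => ω j = c)

/-- The average of `f j * g j` over a (possibly empty) set of rows; by the
convention `0 / 0 = 0`, the average over an empty set of rows is `0`. -/
noncomputable def avgOver (N : ℕ) (f g : Fin N → ℝ) (s : Finset (Fin N)) : ℝ :=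
  (∑ j ∈ s, f j * g j) / s.card

open Real Set Finset ProbabilityTheory

theorem ConvexOn.nonneg_of_hasDerivAt_zero {S : Set ℝ} {f : ℝ → ℝ} (hf : ConvexOn ℝ S f)
    (h0 : 0 ∈ S) (hf0 : f 0 = 0) (hf' : HasDerivAt f 0 0) {x : ℝ} (hx : x ∈ S) :
    0 ≤ f x := by
  rcases lt_trichotomy x 0 with hneg | rfl | hpos
  · have := hf.slope_le_of_hasDerivAt hx h0 hneg hf'
    rw [slope_def_field, hf0, div_le_iff₀ (by linarith)] at this
    linarith
  · exact hf0.ge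
  · have := hf.le_slope_of_hasDerivAt h0 hx hpos hf'
    rw [slope_def_field, hf0, le_div_iff₀ (by linarith)] at this
    linarith

theorem three_add_exp_div_four_le_exp {κ : ℝ} {D : Set ℝ} (hD : Convex ℝ D) (h0 : 0 ∈ D)
    (hκ : ∀ t ∈ D, 3 * exp t / (3 + exp t) ^ 2 ≤ 2 * κ) {t : ℝ} (ht : t ∈ D) :
    (3 + exp t) / 4 ≤ exp (t / 4 + κ * t ^ 2) := by
  set f : ℝ → ℝ := fun t => t / 4 + κ * t ^ 2 - log ((3 + exp t) / 4)
  have hpos : ∀ t, 0 < 3 + exp t := fun t => by positivity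
  have hf' : ∀ t, HasDerivAt f (1 / 4 + 2 * κ * t - exp t / (3 + exp t)) t := fun t =>
    (((hasDerivAt_id' t).div_const 4).add ((hasDerivAt_pow 2 t).const_mul κ) |>.sub
      ((((hasDerivAt_exp t).const_add 3).div_const 4).log (by positivity))).congr_deriv
      (by field_simp; ring)
  have hf'' : ∀ t, HasDerivAt (fun t => 1 / 4 + 2 * κ * t - exp t / (3 + exp t))
      (2 * κ - 3 * exp t / (3 + exp t) ^ 2) t := fun t =>
    ((((hasDerivAt_id' t).const_mul (2 * κ)).const_add (1 / 4)).sub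
      ((hasDerivAt_exp t).div ((hasDerivAt_exp t).const_add 3) (hpos t).ne')).congr_deriv
      (by field_simp; ring)
  have hconv : ConvexOn ℝ D f :=
    convexOn_of_hasDerivWithinAt2_nonneg hD (fun t _ => (hf' t).continuousAt.continuousWithinAt)
      (fun t _ => (hf' t).hasDerivWithinAt) (fun t _ => (hf'' t).hasDerivWithinAt)
      (fun t ht => sub_nonneg.2 (hκ t (interior_subset ht)))
  have hfx := hconv.nonneg_of_hasDerivAt_zero h0 (by norm_num [f])
    (by convert hf' 0 using 1; norm_num) ht
  rw [← exp_log (by linarith [hpos t] : 0 < (3 + exp t) / 4)]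
  exact exp_le_exp.2 (by simp only [f] at hfx; linarith)

lemma exp_three_eighths_le : exp (3 / 8) ≤ 3 / 2 := by
  have he : exp 1 < 2.7182818286 := exp_one_lt_d9
  have h8 : exp (3 / 8) ^ 8 = exp 1 ^ 3 := by
    rw [← exp_nat_mul, ← exp_nat_mul]; norm_num
  refine le_of_pow_le_pow_left₀ (n := 8) (by norm_num) (by norm_num) ?_
  rw [h8]
  calc exp 1 ^ 3 ≤ 2.7182818286 ^ 3 := pow_le_pow_left₀ (exp_pos 1).le he.le 3
    _ ≤ (3 / 2) ^ 8 := by norm_num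

theorem three_add_exp_div_four_le_of_nonneg {t : ℝ} (h0 : 0 ≤ t) (h : t ≤ 3 / 8) :
    (3 + exp t) / 4 ≤ exp (t / 4 + 1 / 9 * t ^ 2) := by
  refine three_add_exp_div_four_le_exp (convex_Icc 0 (3 / 8)) (left_mem_Icc.2 (by norm_num))
    (fun u hu => ?_) ⟨h0, h⟩
  have h1 : 1 ≤ exp u := one_le_exp hu.1
  have h2 : exp u ≤ 3 / 2 := (exp_le_exp.2 hu.2).trans exp_three_eighths_le
  rw [div_le_iff₀ (by positivity)]
  nlinarith

theorem three_add_exp_div_four_le_of_nonpos {t : ℝ} (h : t ≤ 0) :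
    (3 + exp t) / 4 ≤ exp (t / 4 + 3 / 32 * t ^ 2) := by
  refine three_add_exp_div_four_le_exp (convex_Iic 0) self_mem_Iic (fun u hu => ?_) h
  have h1 : exp u ≤ 1 := exp_le_one_iff.2 hu
  rw [div_le_iff₀ (by positivity)]
  nlinarith [exp_pos u]

lemma sum_exp_ite_le {α : Type*} [Fintype α] {q : α → Prop} [DecidablePred q] {t : ℝ}
    (h : (4 * #{v | q v} - Fintype.card α : ℝ) * (exp t - 1) ≤ 0) :
    ∑ v, exp (if q v then t else 0) ≤ Fintype.card α * ((3 + exp t) / 4) := by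
  have hcard := card_filter_add_card_filter_not (s := univ) q
  rw [card_univ] at hcard
  simp only [apply_ite exp, exp_zero, sum_ite, sum_const, nsmul_eq_mul, mul_one]
  rw [← hcard] at h ⊢
  push_cast at h ⊢
  linarith

section Chernoff

variable {ι α : Type*} [Fintype ι] [DecidableEq ι] [Fintype α] [Nonempty α]
  [MeasurableSpace α] [MeasurableSingletonClass α]

theorem measureReal_uniformOfFintype_pi_le (g : ι → α → ℝ) (a : ℝ) :
    (PMF.uniformOfFintype (ι → α)).toMeasure.real {ω | a ≤ ∑ i, g i (ω i)} ≤
      exp (-a) * ∏ i, (∑ v, exp (g i v)) / Fintype.card α := by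
  have hmgf : mgf (fun ω => ∑ i, g i (ω i)) (PMF.uniformOfFintype (ι → α)).toMeasure 1 =
      ∏ i, (∑ v, exp (g i v)) / Fintype.card α := by
    rw [mgf, PMF.integral_eq_sum, prod_div_distrib, Fintype.prod_sum, prod_const, card_univ,
      div_eq_inv_mul, mul_sum]
    simp only [PMF.uniformOfFintype_apply, one_mul, exp_sum, ENNReal.toReal_inv,
      ENNReal.toReal_pow, ENNReal.toReal_natCast, smul_eq_mul, Fintype.card_fun, Nat.cast_pow]
  simpa [hmgf] using measure_ge_le_exp_mul_mgf (X := fun ω => ∑ i, g i (ω i))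
    (μ := (PMF.uniformOfFintype (ι → α)).toMeasure) a zero_le_one .of_finite

variable (p : ι → α → Prop) [∀ i, DecidablePred (p i)]

theorem measureReal_le_mul_card_filter_le {t : ℝ}
    (hp : ∀ i, (4 * #{v | p i v} - Fintype.card α : ℝ) * (exp t - 1) ≤ 0) (a : ℝ) :
    (PMF.uniformOfFintype (ι → α)).toMeasure.real {ω | a ≤ t * #{i | p i (ω i)}} ≤
      exp (-a) * ((3 + exp t) / 4) ^ Fintype.card ι := by
  have hsum : ∀ ω : ι → α, t * #{i | p i (ω i)} = ∑ i, (if p i (ω i) then t else 0) := by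
    intro ω
    rw [sum_ite, sum_const_zero, add_zero, sum_const, nsmul_eq_mul, mul_comm]
  simp_rw [hsum]
  calc _ ≤ exp (-a) * ∏ i, (∑ v, exp (if p i v then t else 0)) / Fintype.card α :=
        measureReal_uniformOfFintype_pi_le _ a
    _ ≤ exp (-a) * ∏ _i : ι, (3 + exp t) / 4 := by
        refine mul_le_mul_of_nonneg_left
          (prod_le_prod (fun i _ => by positivity) fun i _ => ?_) (exp_pos _).le
        rw [div_le_iff₀ (by positivity), mul_comm]
        exact sum_exp_ite_le (hp i)
    _ = exp (-a) * ((3 + exp t) / 4) ^ Fintype.card ι := by rw [prod_const, card_univ]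

theorem measureReal_card_filter_ge_le (hp : ∀ i, 4 * #{v | p i v} ≤ Fintype.card α)
    {s : ℝ} (hs0 : 0 ≤ s) (hs : s ≤ 1 / 12) :
    (PMF.uniformOfFintype (ι → α)).toMeasure.real
        {ω | (1 / 4 + s) * Fintype.card ι ≤ #{i | p i (ω i)}} ≤
      exp (-(9 / 4) * s ^ 2 * Fintype.card ι) := by
  set t := 9 / 2 * s with ht_def
  have ht : 0 ≤ t := by positivity
  have hsub : {ω : ι → α | (1 / 4 + s) * Fintype.card ι ≤ #{i | p i (ω i)}} ⊆
      {ω | t * ((1 / 4 + s) * Fintype.card ι) ≤ t * #{i | p i (ω i)}} :=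
    fun ω hω => mul_le_mul_of_nonneg_left hω ht
  have hrow : ∀ i, (4 * #{v | p i v} - Fintype.card α : ℝ) * (exp t - 1) ≤ 0 := fun i =>
    have : (4 * #{v | p i v} : ℝ) ≤ Fintype.card α := by exact_mod_cast hp i
    mul_nonpos_of_nonpos_of_nonneg (by linarith) (sub_nonneg.2 (one_le_exp ht))
  calc _ ≤ exp (-(t * ((1 / 4 + s) * Fintype.card ι))) * ((3 + exp t) / 4) ^ Fintype.card ι :=
        (measureReal_mono hsub).trans (measureReal_le_mul_card_filter_le p hrow _)
    _ ≤ exp (-(t * ((1 / 4 + s) * Fintype.card ι))) *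
          exp (t / 4 + 1 / 9 * t ^ 2) ^ Fintype.card ι := by
        gcongr
        exact three_add_exp_div_four_le_of_nonneg ht (by linarith)
    _ = exp (-(9 / 4) * s ^ 2 * Fintype.card ι) := by
        rw [← exp_nat_mul, ← exp_add, ht_def]
        ring_nf

theorem measureReal_card_filter_le_le (hp : ∀ i, Fintype.card α ≤ 4 * #{v | p i v})
    {s : ℝ} (hs0 : 0 ≤ s) :
    (PMF.uniformOfFintype (ι → α)).toMeasure.real
        {ω | (#{i | p i (ω i)} : ℝ) ≤ (1 / 4 - s) * Fintype.card ι} ≤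
      exp (-(8 / 3) * s ^ 2 * Fintype.card ι) := by
  set t := -(16 / 3 * s) with ht_def
  have ht : t ≤ 0 := by linarith
  have hsub : {ω : ι → α | (#{i | p i (ω i)} : ℝ) ≤ (1 / 4 - s) * Fintype.card ι} ⊆
      {ω | t * ((1 / 4 - s) * Fintype.card ι) ≤ t * #{i | p i (ω i)}} :=
    fun ω hω => mul_le_mul_of_nonpos_left hω ht
  have hrow : ∀ i, (4 * #{v | p i v} - Fintype.card α : ℝ) * (exp t - 1) ≤ 0 := fun i =>
    have : (Fintype.card α : ℝ) ≤ 4 * #{v | p i v} := by exact_mod_cast hp i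
    mul_nonpos_of_nonneg_of_nonpos (by linarith) (sub_nonpos.2 (exp_le_one_iff.2 ht))
  calc _ ≤ exp (-(t * ((1 / 4 - s) * Fintype.card ι))) * ((3 + exp t) / 4) ^ Fintype.card ι :=
        (measureReal_mono hsub).trans (measureReal_le_mul_card_filter_le p hrow _)
    _ ≤ exp (-(t * ((1 / 4 - s) * Fintype.card ι))) *
          exp (t / 4 + 3 / 32 * t ^ 2) ^ Fintype.card ι := by
        gcongr
        exact three_add_exp_div_four_le_of_nonpos ht
    _ = exp (-(8 / 3) * s ^ 2 * Fintype.card ι) := by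
        rw [← exp_nat_mul, ← exp_add, ht_def]
        ring_nf

end Chernoff

lemma div_le_div_add_abs_sub_div {S n M : ℝ} (hS : |S| ≤ n) (hM : 0 < M) :
    S / n ≤ S / M + |n - M| / M := by
  rcases (abs_nonneg S).trans hS |>.eq_or_lt with hn | hn
  · rw [← hn, div_zero]
    have : S = 0 := abs_eq_zero.1 (le_antisymm (hn ▸ hS) (abs_nonneg S))
    rw [this, zero_div, zero_add]
    positivity
  · have key : S / n - S / M = S / n * ((M - n) / M) := by field_simp
    have h1 : |S / n| ≤ 1 := by rw [abs_div, abs_of_pos hn]; exact div_le_one_of_le₀ hS hn.le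
    have h2 : S / n * ((M - n) / M) ≤ |S / n| * (|n - M| / M) := by
      calc _ ≤ |S / n * ((M - n) / M)| := le_abs_self _
        _ = |S / n| * (|n - M| / M) := by
          rw [abs_mul, abs_div (M - n), abs_of_pos hM, abs_sub_comm]
    have h3 : |S / n| * (|n - M| / M) ≤ |n - M| / M :=
      mul_le_of_le_one_left (by positivity) h1
    linarith

lemma sum_eq_card_sub_two_mul_card_filter {ι : Type*} [Fintype ι] {t : ι → ℝ}
    (ht : ∀ i, t i = 1 ∨ t i = -1) :
    ∑ i, t i = Fintype.card ι - 2 * #{i | t i = -1} := by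
  have h : ∀ i, t i = 1 - 2 * if t i = -1 then 1 else 0 := fun i => by
    rcases ht i with h | h <;> simp [h] <;> norm_num
  rw [sum_congr rfl fun i _ => h i, sum_sub_distrib, ← mul_sum, sum_boole]
  simp

lemma exp_neg_eight_thirds_mul_le {y : ℝ} (hy : 8 * exp (-(9 / 4) * y) < 1) :
    exp (-(8 / 3) * y) ≤ 3 / 4 * exp (-(9 / 4) * y) := by
  have h8 : 8 < exp (9 / 4 * y) := by
    rw [show -(9 / 4) * y = -(9 / 4 * y) by ring, exp_neg] at hy
    rwa [← div_eq_mul_inv, div_lt_one (exp_pos _)] at hy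
  have h43 : 4 / 3 ≤ exp (5 / 12 * y) := by
    refine le_of_pow_le_pow_left₀ (n := 27) (by norm_num) (exp_pos _).le ?_
    calc (4 / 3 : ℝ) ^ 27 ≤ 8 ^ 5 := by norm_num
      _ ≤ exp (9 / 4 * y) ^ 5 := pow_le_pow_left₀ (by norm_num) h8.le 5
      _ = exp (5 / 12 * y) ^ 27 := by rw [← exp_nat_mul, ← exp_nat_mul]; ring_nf
  rw [show -(8 / 3) * y = -(9 / 4) * y - 5 / 12 * y by ring, exp_sub, div_eq_mul_inv, mul_comm]
  gcongr
  rw [inv_le_comm₀ (exp_pos _) (by norm_num)]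
  linarith

section CHSH

variable {N : ℕ} (A A' B B' : Fin N → ℝ)

noncomputable def observedCHSH (ω : Fin N → Bool × Bool) : ℝ :=
  avgOver N A B (obsRows N ω (true, true)) + avgOver N A B' (obsRows N ω (true, false))
    + avgOver N A' B (obsRows N ω (false, true)) - avgOver N A' B' (obsRows N ω (false, false))

def chshTerm (j : Fin N) : Bool × Bool → ℝ
  | (true, true) => A j * B j
  | (true, false) => A j * B' j
  | (false, true) => A' j * B j
  | (false, false) => -(A' j * B' j)

lemma observedCHSH_eq_sum (ω : Fin N → Bool × Bool) :
    observedCHSH A A' B B' ω =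
      ∑ c, (∑ j ∈ obsRows N ω c, chshTerm A A' B B' j c) / #(obsRows N ω c) := by
  simp only [observedCHSH, avgOver, chshTerm, Fintype.sum_prod_type, Fintype.sum_bool,
    sum_neg_distrib, neg_div]
  ring

lemma sum_chshTerm_eq_sum_obsRows (ω : Fin N → Bool × Bool) :
    ∑ j, chshTerm A A' B B' j (ω j) =
      ∑ c, ∑ j ∈ obsRows N ω c, chshTerm A A' B B' j c := by
  rw [← sum_fiberwise univ ω]
  refine sum_congr rfl fun c _ => sum_congr rfl fun j hj => ?_
  rw [(mem_filter.1 hj).2]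

variable {A A' B B'}

lemma chshTerm_eq_one_or_neg_one
    (hA : ∀ j, A j = 1 ∨ A j = -1) (hA' : ∀ j, A' j = 1 ∨ A' j = -1)
    (hB : ∀ j, B j = 1 ∨ B j = -1) (hB' : ∀ j, B' j = 1 ∨ B' j = -1)
    (j : Fin N) (c : Bool × Bool) :
    chshTerm A A' B B' j c = 1 ∨ chshTerm A A' B B' j c = -1 := by
  rcases hA j with ha | ha <;> rcases hA' j with ha' | ha' <;> rcases hB j with hb | hb <;>
    rcases hB' j with hb' | hb' <;> rcases c with ⟨_ | _, _ | _⟩ <;> simp [chshTerm, *]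

lemma exists_chshTerm_eq_neg_one
    (hA : ∀ j, A j = 1 ∨ A j = -1) (hA' : ∀ j, A' j = 1 ∨ A' j = -1)
    (hB : ∀ j, B j = 1 ∨ B j = -1) (hB' : ∀ j, B' j = 1 ∨ B' j = -1)
    (j : Fin N) : ∃ c, chshTerm A A' B B' j c = -1 := by
  by_contra! h
  have h1 c : chshTerm A A' B B' j c = 1 :=
    (chshTerm_eq_one_or_neg_one hA hA' hB hB' j c).resolve_right (h c)
  have hsq : ∀ x : ℝ, x = 1 ∨ x = -1 → x ^ 2 = 1 := by rintro x (rfl | rfl) <;> norm_num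
  -- the four terms multiply to `-(A A' B B')² = -1`
  have := h1 (true, true); have := h1 (true, false); have := h1 (false, true)
  have := h1 (false, false)
  simp only [chshTerm] at *
  nlinarith [hsq _ (hA j), hsq _ (hA' j), hsq _ (hB j), hsq _ (hB' j)]

lemma abs_sum_chshTerm_le_card
    (hA : ∀ j, A j = 1 ∨ A j = -1) (hA' : ∀ j, A' j = 1 ∨ A' j = -1)
    (hB : ∀ j, B j = 1 ∨ B j = -1) (hB' : ∀ j, B' j = 1 ∨ B' j = -1)
    (s : Finset (Fin N)) (c : Bool × Bool) :
    |∑ j ∈ s, chshTerm A A' B B' j c| ≤ #s := by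
  refine (abs_sum_le_sum_abs _ _).trans (le_of_eq ?_)
  rw [card_eq_sum_ones, Nat.cast_sum]
  refine sum_congr rfl fun j _ => ?_
  rcases chshTerm_eq_one_or_neg_one hA hA' hB hB' j c with h | h <;> simp [h]

lemma observedCHSH_le
    (hA : ∀ j, A j = 1 ∨ A j = -1) (hA' : ∀ j, A' j = 1 ∨ A' j = -1)
    (hB : ∀ j, B j = 1 ∨ B j = -1) (hB' : ∀ j, B' j = 1 ∨ B' j = -1)
    (hN : 0 < N) (ω : Fin N → Bool × Bool) {s : ℝ}
    (hn : ∀ c, |(#(obsRows N ω c) : ℝ) - N / 4| ≤ s * N)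
    (hm : (1 / 4 - s) * N ≤ #{j | chshTerm A A' B B' j (ω j) = -1}) :
    observedCHSH A A' B B' ω ≤ 2 + 24 * s := by
  have hN4 : (0 : ℝ) < N / 4 := by positivity
  calc observedCHSH A A' B B' ω
      = ∑ c, (∑ j ∈ obsRows N ω c, chshTerm A A' B B' j c) / #(obsRows N ω c) :=
        observedCHSH_eq_sum A A' B B' ω
    _ ≤ ∑ c, ((∑ j ∈ obsRows N ω c, chshTerm A A' B B' j c) / (N / 4) + s * N / (N / 4)) :=
        sum_le_sum fun c _ =>
          (div_le_div_add_abs_sub_div (abs_sum_chshTerm_le_card hA hA' hB hB' _ c) hN4).trans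
            (by gcongr; exact hn c)
    _ = (∑ j, chshTerm A A' B B' j (ω j)) / (N / 4) + 16 * s := by
        rw [sum_chshTerm_eq_sum_obsRows, sum_add_distrib, ← sum_div, sum_const, card_univ]
        simp only [Fintype.card_prod, Fintype.card_bool, nsmul_eq_mul]
        field_simp
        ring
    _ = (N - 2 * #{j | chshTerm A A' B B' j (ω j) = -1}) / (N / 4) + 16 * s := by
        rw [sum_eq_card_sub_two_mul_card_filter
          fun j => chshTerm_eq_one_or_neg_one hA hA' hB hB' j _, Fintype.card_fin]
    _ ≤ 2 + 24 * s := by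
        rw [div_add' _ _ _ hN4.ne', div_le_iff₀ hN4]
        linarith

lemma observedCHSH_le_four
    (hA : ∀ j, A j = 1 ∨ A j = -1) (hA' : ∀ j, A' j = 1 ∨ A' j = -1)
    (hB : ∀ j, B j = 1 ∨ B j = -1) (hB' : ∀ j, B' j = 1 ∨ B' j = -1)
    (ω : Fin N → Bool × Bool) : observedCHSH A A' B B' ω ≤ 4 := by
  rw [observedCHSH_eq_sum]
  calc _ ≤ ∑ _c : Bool × Bool, (1 : ℝ) := sum_le_sum fun c _ =>
        div_le_one_of_le₀ ((le_abs_self _).trans (abs_sum_chshTerm_le_card hA hA' hB hB' _ c))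
          (Nat.cast_nonneg _)
    _ = 4 := by simp

theorem measureReal_observedCHSH_gt_le
    (hA : ∀ j, A j = 1 ∨ A j = -1) (hA' : ∀ j, A' j = 1 ∨ A' j = -1)
    (hB : ∀ j, B j = 1 ∨ B j = -1) (hB' : ∀ j, B' j = 1 ∨ B' j = -1)
    (hN : 0 < N) {s : ℝ} (hs0 : 0 ≤ s) (hs : s ≤ 1 / 12) :
    (PMF.uniformOfFintype (Fin N → Bool × Bool)).toMeasure.real
        {ω | 2 + 24 * s < observedCHSH A A' B B' ω} ≤
      4 * exp (-(9 / 4) * s ^ 2 * N) + 5 * exp (-(8 / 3) * s ^ 2 * N) := by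
  set μ := (PMF.uniformOfFintype (Fin N → Bool × Bool)).toMeasure
  let U (c : Bool × Bool) := {ω : Fin N → Bool × Bool | (1 / 4 + s) * N ≤ #(obsRows N ω c)}
  let L (c : Bool × Bool) :=
    {ω : Fin N → Bool × Bool | (#(obsRows N ω c) : ℝ) ≤ (1 / 4 - s) * N}
  let W := {ω : Fin N → Bool × Bool |
    (#{j | chshTerm A A' B B' j (ω j) = -1} : ℝ) ≤ (1 / 4 - s) * N}
  have hsub :
      {ω | 2 + 24 * s < observedCHSH A A' B B' ω} ⊆ (⋃ c, U c) ∪ (⋃ c, L c) ∪ W := by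
    intro ω hω
    by_contra hω'
    simp only [Set.mem_union, mem_iUnion, not_or, not_exists, mem_ofPred_eq, not_le, U, L, W]
      at hω'
    obtain ⟨⟨hU, hL⟩, hW⟩ := hω'
    refine hω.not_ge (observedCHSH_le hA hA' hB hB' hN ω (fun c => abs_le.2 ⟨?_, ?_⟩) hW.le)
    · linarith [hL c]
    · linarith [hU c]
  have hU (c : Bool × Bool) : μ.real (U c) ≤ exp (-(9 / 4) * s ^ 2 * N) := by
    have h := measureReal_card_filter_ge_le (ι := Fin N) (α := Bool × Bool) (fun _ v => v = c)
      (fun _ => by simp [filter_eq']) hs0 hs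
    rwa [Fintype.card_fin] at h
  have hL (c : Bool × Bool) : μ.real (L c) ≤ exp (-(8 / 3) * s ^ 2 * N) := by
    have h := measureReal_card_filter_le_le (ι := Fin N) (α := Bool × Bool) (fun _ v => v = c)
      (fun _ => by simp [filter_eq']) hs0
    rwa [Fintype.card_fin] at h
  have hW : μ.real W ≤ exp (-(8 / 3) * s ^ 2 * N) := by
    have hp j : Fintype.card (Bool × Bool) ≤ 4 * #{v | chshTerm A A' B B' j v = -1} := by
      obtain ⟨c, hc⟩ := exists_chshTerm_eq_neg_one hA hA' hB hB' j
      have : 0 < #{v | chshTerm A A' B B' j v = -1} := card_pos.2 ⟨c, by simpa using hc⟩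
      simp only [Fintype.card_prod, Fintype.card_bool]
      omega
    have h := measureReal_card_filter_le_le (ι := Fin N) _ hp hs0
    rwa [Fintype.card_fin] at h
  calc μ.real _ ≤ μ.real ((⋃ c, U c) ∪ (⋃ c, L c) ∪ W) := measureReal_mono hsub
    _ ≤ ∑ c, μ.real (U c) + ∑ c, μ.real (L c) + μ.real W :=
        (measureReal_union_le _ _).trans <| add_le_add_left ((measureReal_union_le _ _).trans
          (add_le_add (measureReal_iUnion_fintype_le _) (measureReal_iUnion_fintype_le _))) _
    _ ≤ ∑ _c : Bool × Bool, exp (-(9 / 4) * s ^ 2 * N)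
          + ∑ _c : Bool × Bool, exp (-(8 / 3) * s ^ 2 * N) + exp (-(8 / 3) * s ^ 2 * N) := by
        gcongr with c _ c _
        exacts [hU c, hL c]
    _ = 4 * exp (-(9 / 4) * s ^ 2 * N) + 5 * exp (-(8 / 3) * s ^ 2 * N) := by
        simp
        ring

theorem measureReal_observedCHSH_gt_le_eight_mul_exp
    (hA : ∀ j, A j = 1 ∨ A j = -1) (hA' : ∀ j, A' j = 1 ∨ A' j = -1)
    (hB : ∀ j, B j = 1 ∨ B j = -1) (hB' : ∀ j, B' j = 1 ∨ B' j = -1)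
    {η : ℝ} (hη : 0 ≤ η) (hη2 : η < 2) (h8 : 8 * exp (-(N : ℝ) * (η / 16) ^ 2) < 1) :
    (PMF.uniformOfFintype (Fin N → Bool × Bool)).toMeasure.real
        {ω | 2 + η < observedCHSH A A' B B' ω} ≤ 8 * exp (-(N : ℝ) * (η / 16) ^ 2) := by
  have hN : 0 < N := Nat.pos_of_ne_zero fun h => by simp [h] at h8
  have hE : exp (-(9 / 4) * (η / 24) ^ 2 * N) = exp (-(N : ℝ) * (η / 16) ^ 2) := by ring_nf
  have hlower := exp_neg_eight_thirds_mul_le (y := (η / 24) ^ 2 * N) (by rwa [← mul_assoc, hE])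
  simp only [← mul_assoc, hE] at hlower
  have hbad := measureReal_observedCHSH_gt_le hA hA' hB hB' hN (s := η / 24) (by positivity)
    (by linarith)
  rw [hE, mul_div_cancel₀ η (by norm_num : (24 : ℝ) ≠ 0)] at hbad
  linarith [exp_pos (-(N : ℝ) * (η / 16) ^ 2)]

end CHSH

theorem finite_sample_chsh_general (N : ℕ) (A A' B B' : Fin N → ℝ)
    (hA : ∀ j, A j = 1 ∨ A j = -1) (hA' : ∀ j, A' j = 1 ∨ A' j = -1)
    (hB : ∀ j, B j = 1 ∨ B j = -1) (hB' : ∀ j, B' j = 1 ∨ B' j = -1)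
    (η : ℝ) (hη : 0 ≤ η) :
    ENNReal.ofReal (1 - 8 * Real.exp (-(N : ℝ) * (η / 16) ^ 2)) ≤
      (PMF.uniformOfFintype (Fin N → Bool × Bool)).toMeasure
        {ω | avgOver N A B (obsRows N ω (true, true))
            + avgOver N A B' (obsRows N ω (true, false))
            + avgOver N A' B (obsRows N ω (false, true))
            - avgOver N A' B' (obsRows N ω (false, false)) ≤ 2 + η} := by
  set E := exp (-(N : ℝ) * (η / 16) ^ 2)
  set μ := (PMF.uniformOfFintype (Fin N → Bool × Bool)).toMeasure
  change ENNReal.ofReal (1 - 8 * E) ≤ μ {ω | observedCHSH A A' B B' ω ≤ 2 + η}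
  rcases le_or_gt (1 - 8 * E) 0 with h8E | h8E
  · simp [ENNReal.ofReal_eq_zero.2 h8E]
  rcases le_or_gt 2 η with hη2 | hη2
  · have huniv : {ω | observedCHSH A A' B B' ω ≤ 2 + η} = univ :=
      eq_univ_of_forall fun ω => (observedCHSH_le_four hA hA' hB hB' ω).trans (by linarith)
    rw [huniv, measure_univ]
    exact ENNReal.ofReal_le_one.2 (by linarith [exp_pos (-(N : ℝ) * (η / 16) ^ 2)])
  have hbad := measureReal_observedCHSH_gt_le_eight_mul_exp hA hA' hB hB' hη hη2 (by linarith)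
  have hcompl : {ω | observedCHSH A A' B B' ω ≤ 2 + η}ᶜ =
      {ω | 2 + η < observedCHSH A A' B B' ω} := by
    ext; simp
  rw [← hcompl, probReal_compl_eq_one_sub (toFinite _).measurableSet] at hbad
  rw [← ofReal_measureReal]
  exact ENNReal.ofReal_le_ofReal (by linarith)

/-- Theorem 1 (finite-sample CHSH inequality): given an `N × 4` table of numbers
`±1` with columns `A, A', B, B'`, if in every row, independently and uniformly
at random, just one of `A, A'` and just one of `B, B'` is observed (two independent
fair coins per row, independent across rows), then for any `η ≥ 0`,
`⟨AB⟩_obs + ⟨AB'⟩_obs + ⟨A'B⟩_obs − ⟨A'B'⟩_obs ≤ 2 + η`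
with probability at least `1 − 8 exp(−N (η/16)²)`. -/
theorem finite_sample_chsh (N : ℕ) (hN : 0 < N) (A A' B B' : Fin N → ℝ)
    (hA : ∀ j, A j = 1 ∨ A j = -1) (hA' : ∀ j, A' j = 1 ∨ A' j = -1)
    (hB : ∀ j, B j = 1 ∨ B j = -1) (hB' : ∀ j, B' j = 1 ∨ B' j = -1)
    (η : ℝ) (hη : 0 ≤ η) :
    ENNReal.ofReal (1 - 8 * Real.exp (-(N : ℝ) * (η / 16) ^ 2)) ≤
      (PMF.uniformOfFintype (Fin N → Bool × Bool)).toMeasure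
        {ω | avgOver N A B (obsRows N ω (true, true))
            + avgOver N A B' (obsRows N ω (true, false))
            + avgOver N A' B (obsRows N ω (false, true))
            - avgOver N A' B' (obsRows N ω (false, false)) ≤ 2 + η} :=
  finite_sample_chsh_general N A A' B B' hA hA' hB hB' η hη
end

section
/- Let x_1, …, x_N be numbers each equal to ±1, with population average m = (1/N)∑_j x_j. If a subset of size n is drawn uniformly at random among all subsets of {1,…,N} of size n, and m_obs denotes the average of x_j over the sampled indices, then for every ε > 0, Pr(m_obs ≥ m + 2ε) ≤ exp(−2nε²). -/
/-!
Put `P = {j | x j = 1}`. The sample sum is `2 #(s ∩ P) - n`, so the event is an upper tail of the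
hypergeometric count `#(s ∩ P)`. Double counting gives its factorial moments,
`E C(#(s ∩ P), j) = C(n, j) C(#P, j) / C(N, j) ≤ C(n, j) p ^ j` with `p = #P / N`, so for
`t ≥ 1` its generating function is dominated by the binomial one:
`E t ^ #(s ∩ P) ≤ (1 + p (t - 1)) ^ n`. Hoeffding's lemma for a Bernoulli variable bounds
`1 + p (e ^ h - 1) ≤ exp (h p + h ^ 2 / 8)`, and the Chernoff bound at `h = 4 ε` yields
`exp (-2 n ε ^ 2)`.
-/

open Finset Real MeasureTheory ProbabilityTheory

theorem Nat.descFactorial_mul_pow_le {K N : ℕ} (hKN : K ≤ N) (j : ℕ) :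
    K.descFactorial j * N ^ j ≤ N.descFactorial j * K ^ j := by
  induction j with
  | zero => simp
  | succ j ih =>
    have hstep : (K - j) * N ≤ (N - j) * K := by
      rcases le_or_gt K j with hj | hj
      · simp [Nat.sub_eq_zero_of_le hj]
      · zify [hj.le, hj.le.trans hKN]
        nlinarith
    calc K.descFactorial (j + 1) * N ^ (j + 1) = (K - j) * N * (K.descFactorial j * N ^ j) := by
          rw [Nat.descFactorial_succ, pow_succ]; ring
      _ ≤ (N - j) * K * (N.descFactorial j * K ^ j) := Nat.mul_le_mul hstep ih
      _ = N.descFactorial (j + 1) * K ^ (j + 1) := by rw [Nat.descFactorial_succ, pow_succ]; ring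

theorem Nat.choose_le_choose_mul_div_pow {K N : ℕ} (hKN : K ≤ N) (hN : 0 < N) (j : ℕ) :
    (K.choose j : ℝ) ≤ N.choose j * ((K : ℝ) / N) ^ j := by
  have h := Nat.descFactorial_mul_pow_le hKN j
  simp only [Nat.descFactorial_eq_factorial_mul_choose, mul_assoc] at h
  rw [div_pow, ← mul_div_assoc, le_div_iff₀ (by positivity)]
  exact_mod_cast Nat.le_of_mul_le_mul_left h (Nat.factorial_pos j)

theorem one_add_pow_eq_sum_range_choose_mul_pow {R : Type*} [CommSemiring R] (y : R) {k n : ℕ}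
    (hk : k ≤ n) : (1 + y) ^ k = ∑ j ∈ range (n + 1), (k.choose j : R) * y ^ j := by
  rw [add_comm, add_pow]
  simp_rw [one_pow, mul_one, mul_comm (y ^ _)]
  refine sum_subset (range_subset_range.2 (by omega)) fun j _ hj => ?_
  rw [mem_range, not_lt] at hj
  simp [Nat.choose_eq_zero_of_lt (by omega : k < j)]

theorem one_add_mul_exp_sub_one_le {p : ℝ} (hp0 : 0 ≤ p) (hp1 : p ≤ 1) (h : ℝ) :
    1 + p * (exp h - 1) ≤ exp (h * p + h ^ 2 / 8) := by
  set μ : Measure ℝ := ENNReal.ofReal p • .dirac 1 + ENNReal.ofReal (1 - p) • .dirac 0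
  have : IsProbabilityMeasure μ := ⟨by
    simp [μ, ← ENNReal.ofReal_add hp0 (sub_nonneg.2 hp1)]⟩
  have hint : ∀ t : ℝ, Integrable (fun x : ℝ => exp (t * x)) μ := fun t =>
    .add_measure (.smul_measure (integrable_dirac enorm_lt_top) ENNReal.ofReal_ne_top)
      (.smul_measure (integrable_dirac enorm_lt_top) ENNReal.ofReal_ne_top)
  have hmean : ∫ x, x ∂μ = p := by
    rw [integral_add_measure]
    · simp [hp0]
    · exact (integrable_dirac enorm_lt_top).smul_measure ENNReal.ofReal_ne_top
    · exact (integrable_dirac enorm_lt_top).smul_measure ENNReal.ofReal_ne_top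
  have hmgf : mgf (fun x => x) μ h = 1 + p * (exp h - 1) := by
    rw [mgf_add_measure (hint h |>.mono_measure (Measure.le_add_right le_rfl))
      (hint h |>.mono_measure (Measure.le_add_left le_rfl)), mgf_smul_measure, mgf_smul_measure,
      mgf_dirac', mgf_dirac']
    simp [hp0, sub_nonneg.2 hp1]
    ring
  have hbound : ∀ᵐ x ∂μ, x ∈ Set.Icc (0:ℝ) 1 := by
    rw [ae_iff]; simp [μ]
  have hoeffding := (hasSubgaussianMGF_of_mem_Icc aemeasurable_id hbound).mgf_le h
  simp only [id, sub_eq_add_neg, mgf_add_const, hmean, hmgf] at hoeffding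
  norm_num at hoeffding
  calc 1 + p * (exp h - 1) = (1 + p * (exp h + -1)) * exp (-(h * p)) * exp (h * p) := by
        rw [mul_assoc, ← exp_add, neg_add_cancel, exp_zero, mul_one, sub_eq_add_neg]
    _ ≤ exp (1 / 4 * h ^ 2 / 2) * exp (h * p) := by gcongr
    _ = exp (h * p + h ^ 2 / 8) := by rw [← exp_add]; ring_nf

theorem Finset.card_filter_ge_le_exp_mul_sum_exp {ι : Type*} (F : Finset ι) (f : ι → ℝ)
    (c : ℝ) {h : ℝ} (hh : 0 ≤ h) :
    (#{s ∈ F | c ≤ f s} : ℝ) ≤ exp (-(h * c)) * ∑ s ∈ F, exp (h * f s) := by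
  rw [mul_sum, card_eq_sum_ones, Nat.cast_sum, Nat.cast_one]
  calc ∑ s ∈ F with c ≤ f s, (1 : ℝ)
      ≤ ∑ s ∈ F with c ≤ f s, exp (-(h * c)) * exp (h * f s) :=
        sum_le_sum fun s hs => by
          rw [← exp_add, one_le_exp_iff]
          nlinarith [(mem_filter.1 hs).2]
    _ ≤ ∑ s ∈ F, exp (-(h * c)) * exp (h * f s) :=
        sum_le_sum_of_subset_of_nonneg (filter_subset _ _) fun _ _ _ => by positivity

section Hypergeometric

variable {α : Type*} [Fintype α] [DecidableEq α]

theorem Finset.sum_choose_card_inter_powersetCard (P : Finset α) {j n : ℕ} (hj : j ≤ n) :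
    ∑ s ∈ powersetCard n univ, (#(s ∩ P)).choose j
      = (#P).choose j * (Fintype.card α - j).choose (n - j) := by
  have hsub : ∀ s : Finset α, (#(s ∩ P)).choose j = #{u ∈ powersetCard j P | u ⊆ s} := by
    intro s
    rw [← card_powersetCard]
    congr 1
    ext u
    simp only [mem_powersetCard, mem_filter, subset_inter_iff]
    tauto
  have hsup : ∀ u ∈ powersetCard j P, #{s ∈ powersetCard n univ | u ⊆ s}
      = (Fintype.card α - j).choose (n - j) := by
    intro u hu
    rw [mem_powersetCard] at hu
    rw [card_filter_powersetCard_subset u univ n (subset_univ u) (hu.2 ▸ hj), card_univ, hu.2]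
  calc ∑ s ∈ powersetCard n univ, (#(s ∩ P)).choose j
      = ∑ s ∈ powersetCard n univ, #((powersetCard j P).bipartiteAbove (· ⊇ ·) s) :=
        sum_congr rfl fun s _ => hsub s
    _ = ∑ u ∈ powersetCard j P, #((powersetCard n univ).bipartiteBelow (· ⊇ ·) u) :=
        sum_card_bipartiteAbove_eq_sum_card_bipartiteBelow _
    _ = ∑ _u ∈ powersetCard j P, (Fintype.card α - j).choose (n - j) := sum_congr rfl hsup
    _ = (#P).choose j * (Fintype.card α - j).choose (n - j) := by
        rw [sum_const, card_powersetCard, smul_eq_mul]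

theorem Finset.sum_pow_card_inter_powersetCard_le [Nonempty α] (P : Finset α) (n : ℕ) {t : ℝ}
    (ht : 1 ≤ t) :
    ∑ s ∈ powersetCard n univ, t ^ #(s ∩ P)
      ≤ (Fintype.card α).choose n * (1 + #P / Fintype.card α * (t - 1)) ^ n := by
  set N := Fintype.card α
  set p : ℝ := #P / N
  have hexpand : ∀ s ∈ powersetCard n univ,
      t ^ #(s ∩ P) = ∑ j ∈ range (n + 1), ((#(s ∩ P)).choose j : ℝ) * (t - 1) ^ j := by
    intro s hs
    have hcard : #(s ∩ P) ≤ n :=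
      (card_le_card inter_subset_left).trans (mem_powersetCard.1 hs).2.le
    rw [← one_add_pow_eq_sum_range_choose_mul_pow _ hcard, add_sub_cancel]
  have hterm : ∀ j ∈ range (n + 1), ((#P).choose j * (N - j).choose (n - j) : ℝ)
      ≤ N.choose n * (n.choose j * p ^ j) := by
    intro j hj
    have hpascal : (N.choose n * n.choose j : ℝ) = N.choose j * (N - j).choose (n - j) := by
      exact_mod_cast Nat.choose_mul (Nat.lt_succ_iff.1 (mem_range.1 hj))
    calc ((#P).choose j * (N - j).choose (n - j) : ℝ)
        ≤ N.choose j * p ^ j * (N - j).choose (n - j) :=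
          mul_le_mul_of_nonneg_right
            (Nat.choose_le_choose_mul_div_pow (card_le_univ P) Fintype.card_pos j) (by positivity)
      _ = N.choose n * (n.choose j * p ^ j) := by rw [← mul_assoc, hpascal]; ring
  calc ∑ s ∈ powersetCard n univ, t ^ #(s ∩ P)
      = ∑ j ∈ range (n + 1),
          (∑ s ∈ powersetCard n univ, (#(s ∩ P)).choose j : ℕ) * (t - 1) ^ j := by
        rw [sum_congr rfl hexpand, sum_comm]
        push_cast
        simp_rw [sum_mul]
    _ = ∑ j ∈ range (n + 1), ((#P).choose j * (N - j).choose (n - j) : ℝ) * (t - 1) ^ j :=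
        sum_congr rfl fun j hj => by
          rw [sum_choose_card_inter_powersetCard P (Nat.lt_succ_iff.1 (mem_range.1 hj)),
            Nat.cast_mul]
    _ ≤ ∑ j ∈ range (n + 1), N.choose n * (n.choose j * p ^ j) * (t - 1) ^ j :=
        sum_le_sum fun j hj =>
          mul_le_mul_of_nonneg_right (hterm j hj) (pow_nonneg (by linarith) j)
    _ = N.choose n * (1 + p * (t - 1)) ^ n := by
        rw [one_add_pow_eq_sum_range_choose_mul_pow _ le_rfl, mul_sum]
        exact sum_congr rfl fun j _ => by rw [mul_pow]; ring

theorem Finset.sum_exp_mul_card_inter_powersetCard_le [Nonempty α] (P : Finset α) (n : ℕ)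
    {h : ℝ} (hh : 0 ≤ h) :
    ∑ s ∈ powersetCard n univ, exp (h * #(s ∩ P))
      ≤ (Fintype.card α).choose n * exp (n * (h * (#P / Fintype.card α) + h ^ 2 / 8)) := by
  set p : ℝ := #P / Fintype.card α
  have hp1 : p ≤ 1 := div_le_one_of_le₀ (by exact_mod_cast card_le_univ P) (by positivity)
  calc ∑ s ∈ powersetCard n univ, exp (h * #(s ∩ P))
      = ∑ s ∈ powersetCard n univ, exp h ^ #(s ∩ P) := by simp_rw [← exp_nat_mul, mul_comm]
    _ ≤ (Fintype.card α).choose n * (1 + p * (exp h - 1)) ^ n :=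
        sum_pow_card_inter_powersetCard_le P n (one_le_exp hh)
    _ ≤ (Fintype.card α).choose n * exp (h * p + h ^ 2 / 8) ^ n := by
        gcongr
        · nlinarith [one_le_exp hh, (by positivity : 0 ≤ p)]
        · exact one_add_mul_exp_sub_one_le (by positivity) hp1 h
    _ = (Fintype.card α).choose n * exp (n * (h * p + h ^ 2 / 8)) := by rw [← exp_nat_mul]

theorem Finset.card_powersetCard_card_inter_ge_le [Nonempty α] (P : Finset α) (n : ℕ) {ε : ℝ}
    (hε : 0 ≤ ε) :
    (#{s ∈ powersetCard n univ | n * (#P / Fintype.card α + ε) ≤ #(s ∩ P)} : ℝ)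
      ≤ (Fintype.card α).choose n * exp (-2 * n * ε ^ 2) := by
  set p : ℝ := #P / Fintype.card α
  calc (#{s ∈ powersetCard n univ | n * (p + ε) ≤ #(s ∩ P)} : ℝ)
      ≤ exp (-(4 * ε * (n * (p + ε))))
          * ∑ s ∈ powersetCard n univ, exp (4 * ε * #(s ∩ P)) :=
        card_filter_ge_le_exp_mul_sum_exp _ _ _ (by positivity)
    _ ≤ exp (-(4 * ε * (n * (p + ε))))
          * ((Fintype.card α).choose n * exp (n * (4 * ε * p + (4 * ε) ^ 2 / 8))) := by
        gcongr
        exact sum_exp_mul_card_inter_powersetCard_le P n (by positivity)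
    _ = (Fintype.card α).choose n * exp (-2 * n * ε ^ 2) := by
        rw [mul_left_comm, ← exp_add]
        ring_nf

end Hypergeometric

theorem sum_eq_two_mul_card_filter_sub_card {α : Type*} {x : α → ℝ}
    (hx : ∀ j, x j = 1 ∨ x j = -1) (s : Finset α) :
    ∑ j ∈ s, x j = 2 * #{j ∈ s | x j = 1} - #s := by
  calc ∑ j ∈ s, x j = ∑ j ∈ s, (2 * (if x j = 1 then 1 else 0) - 1) :=
        sum_congr rfl fun j _ => by rcases hx j with h | h <;> norm_num [h]
    _ = 2 * #{j ∈ s | x j = 1} - #s := by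
        rw [sum_sub_distrib, ← mul_sum, sum_boole, sum_const, nsmul_one]

/-- Sampling without replacement from `±1` values: `x 1, …, x N ∈ {−1,+1}` with
population average `m = (1/N) ∑ j, x j`. A subset of size `n ≤ N` is drawn
uniformly at random among all `n`-element subsets of `{1,…,N}`, and `m_obs`
is the average of `x j` over the sampled indices. Then for every `ε > 0`,
`Pr(m_obs ≥ m + 2ε) ≤ exp(−2 n ε²)`.
(The sample space `Finset (Fin N)` is equipped with the discrete σ-algebra `⊤`.) -/
theorem sampling_hoeffding (N n : ℕ) (hN : 0 < N) (h0 : 0 < n) (hn : n ≤ N)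
    (x : Fin N → ℝ) (hx : ∀ j, x j = 1 ∨ x j = -1)
    (m : ℝ) (hm : m = (1 / N) * ∑ j, x j) (ε : ℝ) (hε : 0 < ε) :
    (@PMF.toMeasure _ ⊤
        (PMF.uniformOfFinset (Finset.powersetCard n (Finset.univ : Finset (Fin N)))
          (Finset.powersetCard_nonempty.mpr (by simpa using hn))))
        {s | m + 2 * ε ≤ (∑ j ∈ s, x j) / n} ≤
      ENNReal.ofReal (Real.exp (-2 * n * ε ^ 2)) := by
  have : Nonempty (Fin N) := ⟨⟨0, hN⟩⟩
  set P : Finset (Fin N) := {j | x j = 1}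
  have hsum : ∀ s : Finset (Fin N), ∑ j ∈ s, x j = 2 * #(s ∩ P) - #s := fun s => by
    rw [sum_eq_two_mul_card_filter_sub_card hx, ← filter_mem_eq_inter]
    simp [P]
  have hm_eq : m = 2 * (#P / N) - 1 := by
    rw [hm, hsum univ, univ_inter, card_univ, Fintype.card_fin]
    field_simp
  have hevent : ∀ s ∈ powersetCard n univ,
      s ∈ {s : Finset (Fin N) | m + 2 * ε ≤ (∑ j ∈ s, x j) / n}
        ↔ n * (#P / Fintype.card (Fin N) + ε) ≤ #(s ∩ P) := by
    intro s hs
    rw [Set.mem_ofPred_eq, hsum, (mem_powersetCard.1 hs).2, hm_eq, le_div_iff₀ (by positivity),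
      Fintype.card_fin]
    constructor <;> intro h <;> linarith
  rw [@PMF.toMeasure_uniformOfFinset_apply _ _ _ _ ⊤ MeasurableSpace.measurableSet_top,
    filter_congr hevent, card_powersetCard, card_univ]
  apply ENNReal.div_le_of_le_mul'
  rw [← ENNReal.ofReal_natCast, ← ENNReal.ofReal_natCast,
    ← ENNReal.ofReal_mul (by positivity)]
  exact ENNReal.ofReal_le_ofReal (card_powersetCard_card_inter_ge_le P n hε.le)
end

section
/- (Tsirelson's inequality, vector form.) Let a, a', b, b' be unit vectors in a real inner product space. Then ⟨a,b⟩ + ⟨a,b'⟩ + ⟨a',b⟩ − ⟨a',b'⟩ ≤ 2√2. -/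
/-!
Regroup the sum as `⟪a, b + b'⟫ + ⟪a', b - b'⟫`. Cauchy–Schwarz bounds it by `‖b + b'‖ + ‖b - b'‖`,
and by `(s + t)² ≤ 2 (s² + t²)` and the parallelogram law this is at most `2 √(‖b‖² + ‖b'‖²) = 2√2`.
-/

theorem norm_add_add_norm_sub_le {𝕜 E : Type*} [RCLike 𝕜] [NormedAddCommGroup E]
    [InnerProductSpace 𝕜 E] (x y : E) :
    ‖x + y‖ + ‖x - y‖ ≤ 2 * √(‖x‖ ^ 2 + ‖y‖ ^ 2) :=
  calc ‖x + y‖ + ‖x - y‖ = √((‖x + y‖ + ‖x - y‖) ^ 2) := (Real.sqrt_sq (by positivity)).symm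
    _ ≤ √(2 * (‖x + y‖ ^ 2 + ‖x - y‖ ^ 2)) := Real.sqrt_le_sqrt add_sq_le
    _ = 2 * √(‖x‖ ^ 2 + ‖y‖ ^ 2) := by
      rw [parallelogram_law_with_norm 𝕜, ← mul_assoc, ← sq, Real.sqrt_mul (by positivity),
        Real.sqrt_sq zero_le_two]

/-- Tsirelson's inequality, vector form: for unit vectors `a, a', b, b'` in a
real inner product space, `⟨a,b⟩ + ⟨a,b'⟩ + ⟨a',b⟩ − ⟨a',b'⟩ ≤ 2√2`. -/
theorem tsirelson_vector {E : Type*} [NormedAddCommGroup E]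
    [InnerProductSpace ℝ E] (a a' b b' : E)
    (ha : ‖a‖ = 1) (ha' : ‖a'‖ = 1) (hb : ‖b‖ = 1) (hb' : ‖b'‖ = 1) :
    (inner ℝ a b : ℝ) + (inner ℝ a b' : ℝ) + (inner ℝ a' b : ℝ) - (inner ℝ a' b' : ℝ)
      ≤ 2 * Real.sqrt 2 :=
  calc (inner ℝ a b : ℝ) + inner ℝ a b' + inner ℝ a' b - inner ℝ a' b'
      = inner ℝ a (b + b') + inner ℝ a' (b - b') := by
        rw [inner_add_right, inner_sub_right]; ring
    _ ≤ ‖b + b'‖ + ‖b - b'‖ :=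
        add_le_add (by simpa [ha] using real_inner_le_norm a (b + b'))
          (by simpa [ha'] using real_inner_le_norm a' (b - b'))
    _ ≤ 2 * √(‖b‖ ^ 2 + ‖b'‖ ^ 2) := norm_add_add_norm_sub_le (𝕜 := ℝ) b b'
    _ = 2 * √2 := by rw [hb, hb']; norm_num
end

section
/- For real γ with 0 < γ ≤ 1, the coincidence-loophole local realist bound 2 + 6(γ⁻¹ − 1) is less than or equal to the Tsirelson value 2√2 if and only if γ ≥ 3(1 − 1/√2); in particular, at γ = 3(1 − 1/√2) one has 2 + 6(γ⁻¹ − 1) = 2√2. -/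
/-!
The bound `2 + 6(γ⁻¹ − 1)` is strictly decreasing in `γ > 0`, and at the threshold
`γ₀ = 3(1 − 1/√2)` one has `γ₀⁻¹ = (2 + √2)/3`, so the bound there is exactly `2√2`.
-/

open Real

lemma one_sub_inv_sqrt_two_pos : 0 < 1 - 1 / √2 := by
  rw [sub_pos, div_lt_one (by positivity)]
  exact one_lt_sqrt_two

lemma inv_three_mul_one_sub_inv_sqrt_two : (3 * (1 - 1 / √2))⁻¹ = (2 + √2) / 3 := by
  apply inv_eq_of_mul_eq_one_right
  field_simp
  linear_combination mul_self_sqrt (zero_le_two : (0 : ℝ) ≤ 2)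

lemma add_six_mul_inv_sub_one_le_iff {a b : ℝ} (ha : 0 < a) (hb : 0 < b) :
    2 + 6 * (a⁻¹ - 1) ≤ 2 + 6 * (b⁻¹ - 1) ↔ b ≤ a := by
  rw [add_le_add_iff_left, mul_le_mul_iff_right₀ (by norm_num : (0 : ℝ) < 6),
    sub_le_sub_iff_right, inv_le_inv₀ ha hb]

theorem coincidence_loophole_threshold_general (γ : ℝ) (h0 : 0 < γ) :
    (2 + 6 * (γ⁻¹ - 1) ≤ 2 * Real.sqrt 2 ↔ 3 * (1 - 1 / Real.sqrt 2) ≤ γ) ∧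
    2 + 6 * ((3 * (1 - 1 / Real.sqrt 2))⁻¹ - 1) = 2 * Real.sqrt 2 := by
  have h_threshold : 2 + 6 * ((3 * (1 - 1 / √2))⁻¹ - 1) = 2 * √2 := by
    rw [inv_three_mul_one_sub_inv_sqrt_two]
    ring
  refine ⟨?_, h_threshold⟩
  rw [← h_threshold]
  exact add_six_mul_inv_sub_one_le_iff h0 (mul_pos three_pos one_sub_inv_sqrt_two_pos)

/-- For efficiency `γ ∈ (0,1]`, the coincidence-loophole local realist bound
`2 + 6(γ⁻¹ − 1)` of Larsson and Gill is at most the Tsirelson value `2√2` if and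
only if `γ ≥ 3(1 − 1/√2)`; in particular, at `γ = 3(1 − 1/√2)` the bound equals
`2√2`. -/
theorem coincidence_loophole_threshold (γ : ℝ) (h0 : 0 < γ) (h1 : γ ≤ 1) :
    (2 + 6 * (γ⁻¹ - 1) ≤ 2 * Real.sqrt 2 ↔ 3 * (1 - 1 / Real.sqrt 2) ≤ γ) ∧
    2 + 6 * ((3 * (1 - 1 / Real.sqrt 2))⁻¹ - 1) = 2 * Real.sqrt 2 :=
  coincidence_loophole_threshold_general γ h0
end
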